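/- arXiv:1505.00607 — 7 statements merged into one kernel-verified Lean document; each statement's English description precedes it below -/
import Mathlib

section
/- For a proper subdomain G of ℝⁿ (n ≥ 2) whose boundary is not contained in a line, the function v_G(x,y) = sup_{z ∈ ∂G} ∠(x,z,y) (the supremum over boundary points z of the angle at vertex z between the segments [x,z] and [y,z]) defines a metric on G. -/
open Real Set Metric

/-- The visual angle metric: supremum over boundary points `z` of the angle at vertex `z`
between the segments `[x,z]` and `[y,z]`. -/
noncomputable def visualAngle {n : ℕ} (G : Set (EuclideanSpace ℝ (Fin n)))
    (x y : EuclideanSpace ℝ (Fin n)) : ℝ :=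
  sSup ((fun z => EuclideanGeometry.angle x z y) '' frontier G)

/-- The frontier of `G` is contained in some affine line. -/
def FrontierInLine {n : ℕ} (G : Set (EuclideanSpace ℝ (Fin n))) : Prop :=
  ∃ p v : EuclideanSpace ℝ (Fin n), frontier G ⊆ {q | ∃ t : ℝ, q = p + t • v}

/-!
Nonnegativity, symmetry and the triangle inequality hold for the angle `∠ x z y` at each boundary
point `z` (the last one is the triangle inequality for angles at a common vertex), and pass to the
supremum. Since `G` is open it misses `∂G`, so `∠ x z x = 0` for `x ∈ G` and `z ∈ ∂G`. Conversely,
if `v_G(x, y) = 0` with `x ≠ y`, then every boundary point sees `x` and `y` at angle `0`, so it lies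
on the line through `x` and `y`.
-/

open EuclideanGeometry

lemma eq_add_smul_sub_of_angle_eq_zero {V : Type*} [NormedAddCommGroup V] [InnerProductSpace ℝ V]
    {x y z : V} (hxy : x ≠ y) (h : ∠ x z y = 0) : ∃ t : ℝ, z = x + t • (y - x) := by
  have hz : z ∈ line[ℝ, x, y] :=
    (collinear_of_angle_eq_zero h).mem_affineSpan_of_mem_of_ne (by simp) (by simp) (by simp) hxy
  obtain ⟨t, ht⟩ := vadd_left_mem_affineSpan_pair.1
    (by simpa using hz : (z - x) +ᵥ x ∈ line[ℝ, x, y])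
  exact ⟨t, by rw [vsub_eq_sub] at ht; rw [ht]; abel⟩

section

variable {n : ℕ} {G : Set (EuclideanSpace ℝ (Fin n))} {x y z w : EuclideanSpace ℝ (Fin n)}

lemma angle_le_visualAngle (hz : z ∈ frontier G) : ∠ x z y ≤ visualAngle G x y :=
  le_csSup ⟨π, by rintro _ ⟨z, -, rfl⟩; exact angle_le_pi _ _ _⟩ ⟨z, hz, rfl⟩

lemma visualAngle_nonneg : 0 ≤ visualAngle G x y :=
  Real.sSup_nonneg <| by rintro _ ⟨z, -, rfl⟩; exact angle_nonneg _ _ _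

-- Junk value: `visualAngle G x y = sSup ∅ = 0` when `∂G = ∅`.
lemma visualAngle_le_of_forall_le {c : ℝ} (hc : 0 ≤ c)
    (h : ∀ z ∈ frontier G, ∠ x z y ≤ c) : visualAngle G x y ≤ c :=
  Real.sSup_le (by rintro _ ⟨z, hz, rfl⟩; exact h z hz) hc

lemma visualAngle_comm (x y : EuclideanSpace ℝ (Fin n)) :
    visualAngle G x y = visualAngle G y x := by
  simp only [visualAngle, angle_comm x _ y]

lemma visualAngle_le_add : visualAngle G x w ≤ visualAngle G x y + visualAngle G y w :=
  visualAngle_le_of_forall_le (add_nonneg visualAngle_nonneg visualAngle_nonneg)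
    fun z hz => (angle_le_angle_add_angle z x y w).trans
      (add_le_add (angle_le_visualAngle hz) (angle_le_visualAngle hz))

lemma visualAngle_self (hG : IsOpen G) (hx : x ∈ G) : visualAngle G x x = 0 :=
  le_antisymm (visualAngle_le_of_forall_le le_rfl fun z hz => by
    have hzx : z ≠ x := by rintro rfl; exact (hG.frontier_eq ▸ hz).2 hx
    rw [angle_self_of_ne hzx.symm]) visualAngle_nonneg

lemma frontierInLine_of_visualAngle_eq_zero (hxy : x ≠ y) (h : visualAngle G x y = 0) :
    FrontierInLine G :=
  ⟨x, y - x, fun _ hz => eq_add_smul_sub_of_angle_eq_zero hxy <|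
    le_antisymm (h ▸ angle_le_visualAngle hz) (angle_nonneg _ _ _)⟩

end

theorem visualAngle_is_metric_general {n : ℕ}
    (G : Set (EuclideanSpace ℝ (Fin n)))
    (hopen : IsOpen G)
    (hline : ¬ FrontierInLine G) :
    (∀ x ∈ G, ∀ y ∈ G, 0 ≤ visualAngle G x y) ∧
    (∀ x ∈ G, ∀ y ∈ G, (visualAngle G x y = 0 ↔ x = y)) ∧
    (∀ x ∈ G, ∀ y ∈ G, visualAngle G x y = visualAngle G y x) ∧
    (∀ x ∈ G, ∀ y ∈ G, ∀ w ∈ G,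
      visualAngle G x w ≤ visualAngle G x y + visualAngle G y w) := by
  refine ⟨fun x _ y _ => visualAngle_nonneg, fun x hx y _ => ⟨fun h => ?_, ?_⟩,
    fun x _ y _ => visualAngle_comm x y, fun x _ y _ w _ => visualAngle_le_add⟩
  · by_contra hxy
    exact hline (frontierInLine_of_visualAngle_eq_zero hxy h)
  · rintro rfl
    exact visualAngle_self hopen hx

/-- For a proper subdomain `G` of `ℝⁿ`, `n ≥ 2`, whose boundary is not contained in a line,
the visual angle function is a metric on `G`. -/
theorem visualAngle_is_metric {n : ℕ} (hn : 2 ≤ n)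
    (G : Set (EuclideanSpace ℝ (Fin n)))
    (hopen : IsOpen G) (hconn : IsConnected G) (hproper : G ≠ univ)
    (hline : ¬ FrontierInLine G) :
    (∀ x ∈ G, ∀ y ∈ G, 0 ≤ visualAngle G x y) ∧
    (∀ x ∈ G, ∀ y ∈ G, (visualAngle G x y = 0 ↔ x = y)) ∧
    (∀ x ∈ G, ∀ y ∈ G, visualAngle G x y = visualAngle G y x) ∧
    (∀ x ∈ G, ∀ y ∈ G, ∀ w ∈ G,
      visualAngle G x w ≤ visualAngle G x y + visualAngle G y w) :=
  visualAngle_is_metric_general G hopen hline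
end

section
/- In the unit ball 𝔹ⁿ, for any x ≠ 0 the visual angle distance from 0 to x equals arcsin|x|, i.e. v_{𝔹ⁿ}(0,x) = arcsin|x| ∈ (0, π/2). -/
open Real Set Metric

/-!
Seen from a point `z` of the sphere, the law of sines in the triangle `0 z x` gives
`sin ∠ 0 z x = ‖x‖ · sin ∠ 0 x z ≤ ‖x‖`, and `∠ 0 z x ≤ π / 2` because `x` lies inside the sphere,
so `∠ 0 z x ≤ arcsin ‖x‖`. In dimension at least two there is a point `z` of the sphere with a
right angle at `x`, and for it the bound is attained.
-/

namespace InnerProductGeometry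

variable {V : Type*} [NormedAddCommGroup V] [InnerProductSpace ℝ V]

theorem angle_le_pi_div_two_of_inner_nonneg {x y : V} (h : 0 ≤ inner ℝ x y) :
    angle x y ≤ π / 2 := by
  rw [angle, Real.arccos_le_pi_div_two]
  exact div_nonneg h (by positivity)

theorem exists_inner_eq_zero_norm_eq [FiniteDimensional ℝ V] (hV : 2 ≤ Module.finrank ℝ V)
    (x : V) {r : ℝ} (hr : 0 ≤ r) : ∃ w : V, inner ℝ x w = 0 ∧ ‖w‖ = r := by
  have hcompl : 0 < Module.finrank ℝ (ℝ ∙ x)ᗮ := by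
    have := (ℝ ∙ x).finrank_add_finrank_orthogonal
    have : Module.finrank ℝ (ℝ ∙ x) ≤ 1 := (finrank_span_le_card ({x} : Set V)).trans (by simp)
    omega
  have : Nontrivial (ℝ ∙ x)ᗮ := Module.nontrivial_of_finrank_pos hcompl
  obtain ⟨w, hw⟩ := exists_norm_eq (ℝ ∙ x)ᗮ hr
  exact ⟨w, Submodule.inner_right_of_mem_orthogonal (Submodule.mem_span_singleton_self x) w.2, hw⟩

end InnerProductGeometry

namespace EuclideanGeometry

open InnerProductGeometry

variable {V P : Type*} [NormedAddCommGroup V] [InnerProductSpace ℝ V] [MetricSpace P]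
  [NormedAddTorsor V P] {s : Sphere P} {z p : P}

theorem angle_center_le_pi_div_two_of_dist_le_radius (hz : z ∈ s)
    (hp : dist p s.center ≤ s.radius) : ∠ s.center z p ≤ π / 2 := by
  rw [angle, ← angle_neg_neg, neg_vsub_eq_vsub_rev, neg_vsub_eq_vsub_rev]
  exact angle_le_pi_div_two_of_inner_nonneg
    (real_inner_comm (z -ᵥ p) _ ▸ inner_nonneg_of_dist_le_radius hz hp)

theorem angle_center_le_arcsin_of_dist_le_radius (hz : z ∈ s) (hp : dist p s.center ≤ s.radius)
    (hr : 0 < s.radius) : ∠ s.center z p ≤ arcsin (dist p s.center / s.radius) := by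
  have hsin : sin (∠ s.center z p) ≤ dist p s.center / s.radius := by
    rw [le_div_iff₀ hr, ← mem_sphere.mp hz]
    calc sin (∠ s.center z p) * dist z s.center
        = sin (∠ s.center p z) * dist p s.center := by
          rw [angle_comm, law_sin, dist_comm s.center p]
      _ ≤ dist p s.center := mul_le_of_le_one_left dist_nonneg (sin_le_one _)
  calc ∠ s.center z p = arcsin (sin (∠ s.center z p)) :=
        (arcsin_sin (by linarith [angle_nonneg s.center z p, pi_pos])
          (angle_center_le_pi_div_two_of_dist_le_radius hz hp)).symm
    _ ≤ arcsin (dist p s.center / s.radius) := monotone_arcsin hsin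

theorem exists_mem_sphere_angle_eq_pi_div_two [FiniteDimensional ℝ V]
    (hV : 2 ≤ Module.finrank ℝ V) (hp : dist p s.center ≤ s.radius) :
    ∃ z ∈ s, ∠ s.center p z = π / 2 := by
  have hr : 0 ≤ s.radius := dist_nonneg.trans hp
  obtain ⟨w, hw, hw_norm⟩ := exists_inner_eq_zero_norm_eq hV (p -ᵥ s.center)
    (sqrt_nonneg (s.radius ^ 2 - dist p s.center ^ 2))
  refine ⟨w +ᵥ p, ?_, ?_⟩
  · rw [mem_sphere, dist_eq_norm_vsub V, vadd_vsub_assoc, ← sq_eq_sq₀ (norm_nonneg _) hr,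
      add_comm, norm_add_sq_real, hw, hw_norm,
      sq_sqrt (sub_nonneg.mpr (pow_le_pow_left₀ dist_nonneg hp 2)), ← dist_eq_norm_vsub V]
    ring
  · rw [angle, vadd_vsub, ← inner_eq_zero_iff_angle_eq_pi_div_two, ← neg_vsub_eq_vsub_rev,
      inner_neg_left, hw, neg_zero]

end EuclideanGeometry

/-- In the unit ball, `v(0,x) = arcsin |x| ∈ (0, π/2)` for `x ≠ 0`. -/
theorem visualAngle_zero_eq_arcsin {n : ℕ} (hn : 2 ≤ n)
    (x : EuclideanSpace ℝ (Fin n)) (hx : x ∈ ball (0 : EuclideanSpace ℝ (Fin n)) 1)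
    (hx0 : x ≠ 0) :
    visualAngle (ball (0 : EuclideanSpace ℝ (Fin n)) 1) 0 x = Real.arcsin ‖x‖ ∧
    Real.arcsin ‖x‖ ∈ Ioo 0 (π / 2) := by
  have hxs : dist x (0 : EuclideanSpace ℝ (Fin n)) ≤ 1 := (mem_ball.mp hx).le
  obtain ⟨z, hz, hright⟩ := EuclideanGeometry.exists_mem_sphere_angle_eq_pi_div_two
    (s := ⟨0, 1⟩) (by rwa [finrank_euclideanSpace_fin]) hxs
  refine ⟨?_, arcsin_pos.mpr (norm_pos_iff.mpr hx0),
    arcsin_lt_pi_div_two.mpr (mem_ball_zero_iff.mp hx)⟩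
  rw [visualAngle, frontier_ball 0 one_ne_zero]
  refine IsGreatest.csSup_eq ⟨⟨z, hz, ?_⟩, ?_⟩
  · have hz1 : dist 0 z = 1 := (dist_comm _ _).trans (EuclideanGeometry.mem_sphere.mp hz)
    show EuclideanGeometry.angle 0 z x = _
    rw [EuclideanGeometry.angle_comm,
      EuclideanGeometry.angle_eq_arcsin_of_angle_eq_pi_div_two hright (Or.inl hx0.symm)]
    simp [hz1]
  · rintro _ ⟨z', hz', rfl⟩
    simpa using EuclideanGeometry.angle_center_le_arcsin_of_dist_le_radius
      (s := ⟨0, 1⟩) hz' hxs one_pos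
end

section
/- In the unit ball 𝔹ⁿ, if |x| = |y| ≠ 0 and θ = (1/2)∠(x,0,y) ∈ (0, π/2], then v_{𝔹ⁿ}(x,y) = 2 arctan( |x| sin θ / (1 − |x| cos θ) ). -/
/-!
Write `x = m + h` and `y = m - h` with `m = (x + y) / 2` orthogonal to `h = (x - y) / 2`, so that
`|m| = |x| cos θ` and `|h| = |x| sin θ`. For `z` on the unit sphere let `N = ⟨x - z, y - z⟩` and let
`q` be the distance from `z` to the line `xy`; then `|x - z|² |y - z|² = N² + 4 |h|² q²`, so the
cosine of `∠(x, z, y)` is an increasing function of the cotangent `N / (2 |h| q)`. By Cauchy–Schwarz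
this cotangent is smallest at the point `z = m / |m|` of the sphere nearest to the chord (at any
unit `z ⊥ h` if `m = 0`), where the triangle `x z y` is isosceles with half-angle
`arctan (|h| / (1 - |m|))`.
-/

open Real Set Metric
open scoped RealInnerProductSpace

theorem arccos_one_sub_sq_div_one_add_sq {t : ℝ} (ht : 0 ≤ t) :
    arccos ((1 - t ^ 2) / (1 + t ^ 2)) = 2 * arctan t := by
  have hcos : cos (2 * arctan t) = (1 - t ^ 2) / (1 + t ^ 2) := by
    rw [cos_two_mul, cos_sq_arctan]
    field_simp
    ring
  rw [← hcos, arccos_cos (by linarith [arctan_nonneg.2 ht]) (by linarith [arctan_lt_pi_div_two t])]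

/-- `N / s` is the cosine of an angle with cotangent `N / (√c q)`, and the cosine is increasing in
the cotangent. -/
theorem mul_le_mul_of_cot_le {N N₀ q q₀ c s s₀ : ℝ} (hq : 0 ≤ q) (hq₀ : 0 < q₀) (hc : 0 ≤ c)
    (hs : 0 ≤ s) (hs₀ : 0 ≤ s₀) (hs2 : s ^ 2 = N ^ 2 + c * q ^ 2)
    (hs₀2 : s₀ ^ 2 = N₀ ^ 2 + c * q₀ ^ 2) (h : N₀ * q ≤ N * q₀) : N₀ * s ≤ N * s₀ := by
  rcases le_or_gt N₀ 0 with hN₀ | hN₀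
  · rcases le_or_gt 0 N with hN | hN
    · nlinarith [mul_nonneg hN hs₀]
    · have hq2 : (N * q₀) ^ 2 ≤ (N₀ * q) ^ 2 := by
        rw [← neg_sq, ← neg_sq (N₀ * q)]
        exact pow_le_pow_left₀ (by nlinarith) (by linarith) 2
      have hsq : |N * s₀| ≤ |N₀ * s| := by
        rw [← sq_le_sq, mul_pow, mul_pow, hs2, hs₀2]
        nlinarith
      rw [abs_of_nonpos (by nlinarith), abs_of_nonpos (by nlinarith)] at hsq
      linarith
  · have hN : 0 ≤ N := by nlinarith
    have hq2 : (N₀ * q) ^ 2 ≤ (N * q₀) ^ 2 := pow_le_pow_left₀ (by positivity) h 2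
    have hsq : |N₀ * s| ≤ |N * s₀| := by
      rw [← sq_le_sq, mul_pow, mul_pow, hs2, hs₀2]
      nlinarith
    rwa [abs_of_nonneg (by positivity), abs_of_nonneg (by positivity)] at hsq

/-- The inequality `N₀ q ≤ N q₀` between cotangents, for `μ = |m|`, `a = |h|`, `P = ⟨m, z⟩`,
`N = |m - z|² - a²` and `q₀ = 1 - μ`. -/
theorem cot_bound {μ a P q : ℝ} (hμ : 0 ≤ μ) (hμa : μ ^ 2 + a ^ 2 ≤ 1) (hq : 0 ≤ q)
    (hPμ : P ≤ μ) (hPq : P - μ ^ 2 ≤ μ * q) (hqE : q ^ 2 ≤ 1 - 2 * P + μ ^ 2) :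
    ((1 - μ) ^ 2 - a ^ 2) * q ≤ (1 - 2 * P + μ ^ 2 - a ^ 2) * (1 - μ) := by
  have hμ1 : μ ≤ 1 := by nlinarith
  rcases le_or_gt (a ^ 2) (1 - 2 * P + μ ^ 2) with hN | hN
  · rcases le_or_gt (1 - μ) q with hq1 | hq1
    · nlinarith [mul_nonneg (sub_nonneg.2 hq1)
        (add_nonneg (mul_nonneg hq (sub_nonneg.2 hμ1)) (sq_nonneg a))]
    · rcases le_or_gt ((1 - μ) ^ 2) (a ^ 2) with h0 | h0
      · nlinarith
      · nlinarith
  · rcases hμ.eq_or_lt with rfl | hμ0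
    · nlinarith
    · have : 0 ≤ μ * ((1 - 2 * P + μ ^ 2 - a ^ 2) * (1 - μ) - ((1 - μ) ^ 2 - a ^ 2) * q) := by
        nlinarith
      nlinarith

variable {V : Type*} [NormedAddCommGroup V] [InnerProductSpace ℝ V]

section
variable {x y : V} (hxy : ‖x‖ = ‖y‖)
include hxy

theorem norm_smul_add_eq_mul_cos :
    ‖(2 : ℝ)⁻¹ • (x + y)‖ = ‖x‖ * cos (InnerProductGeometry.angle x y / 2) := by
  set φ := InnerProductGeometry.angle x y / 2
  have h2φ : InnerProductGeometry.angle x y = 2 * φ := by simp only [φ]; ring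
  have hinner : ⟪x, y⟫ = ‖x‖ ^ 2 * cos (2 * φ) := by
    rw [← InnerProductGeometry.cos_angle_mul_norm_mul_norm, ← hxy, h2φ]; ring
  have hφ : 0 ≤ cos φ := cos_nonneg_of_mem_Icc
    ⟨by linarith [pi_pos, InnerProductGeometry.angle_nonneg x y],
      by linarith [InnerProductGeometry.angle_le_pi x y]⟩
  rw [← sq_eq_sq₀ (norm_nonneg _) (by positivity), norm_smul, mul_pow, norm_add_sq_real, hinner,
    ← hxy, mul_pow, cos_sq φ]
  norm_num
  ring

theorem norm_smul_sub_eq_mul_sin :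
    ‖(2 : ℝ)⁻¹ • (x - y)‖ = ‖x‖ * sin (InnerProductGeometry.angle x y / 2) := by
  set φ := InnerProductGeometry.angle x y / 2
  have h2φ : InnerProductGeometry.angle x y = 2 * φ := by simp only [φ]; ring
  have hinner : ⟪x, y⟫ = ‖x‖ ^ 2 * cos (2 * φ) := by
    rw [← InnerProductGeometry.cos_angle_mul_norm_mul_norm, ← hxy, h2φ]; ring
  have hφ : 0 ≤ sin φ := sin_nonneg_of_nonneg_of_le_pi
    (by linarith [InnerProductGeometry.angle_nonneg x y])
    (by linarith [pi_pos, InnerProductGeometry.angle_le_pi x y])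
  rw [← sq_eq_sq₀ (norm_nonneg _) (by positivity), norm_smul, mul_pow, norm_sub_sq_real, hinner,
    ← hxy, mul_pow, sin_sq, cos_sq φ]
  norm_num
  ring

end

theorem norm_add_sub_sq_of_inner_eq_zero {m h : V} (hmh : ⟪m, h⟫ = 0) (z : V) :
    ‖m + h - z‖ ^ 2 = ‖z‖ ^ 2 - 2 * ⟪m, z⟫ + ‖m‖ ^ 2 + ‖h‖ ^ 2 - 2 * ⟪h, z⟫ := by
  rw [← real_inner_self_eq_norm_sq]
  simp only [inner_add_left, inner_sub_left, inner_add_right, inner_sub_right,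
    real_inner_comm m z, real_inner_comm h z, real_inner_comm m h, hmh, real_inner_self_eq_norm_sq]
  ring

theorem inner_add_sub_sub_sub (m h z : V) :
    ⟪m + h - z, m - h - z⟫ = ‖z‖ ^ 2 - 2 * ⟪m, z⟫ + ‖m‖ ^ 2 - ‖h‖ ^ 2 := by
  simp only [inner_add_left, inner_sub_left, inner_sub_right, real_inner_comm m z,
    real_inner_comm h z, real_inner_comm m h, real_inner_self_eq_norm_sq]
  ring

theorem le_inner_div_norm_mul_norm_of_norm_eq_one {m h z : V} (hmh : ⟪m, h⟫ = 0)
    (hlt : ‖m‖ ^ 2 + ‖h‖ ^ 2 < 1) (hz : ‖z‖ = 1) :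
    ((1 - ‖m‖) ^ 2 - ‖h‖ ^ 2) / ((1 - ‖m‖) ^ 2 + ‖h‖ ^ 2) ≤
      ⟪m + h - z, m - h - z⟫ / (‖m + h - z‖ * ‖m - h - z‖) := by
  have hA := norm_add_sub_sq_of_inner_eq_zero hmh z
  have hB := norm_add_sub_sq_of_inner_eq_zero (h := -h) (by rw [inner_neg_right, hmh, neg_zero]) z
  rw [← sub_eq_add_neg, norm_neg, inner_neg_left] at hB
  have hPμ : ⟪m, z⟫ ≤ ‖m‖ := by simpa [hz] using real_inner_le_norm m z
  rw [inner_add_sub_sub_sub]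
  simp only [hz, one_pow] at hA hB ⊢
  set μ := ‖m‖
  set a := ‖h‖
  set P := ⟪m, z⟫
  set Q := ⟪h, z⟫
  -- the distance from `z` to the line through `m + h` and `m - h`
  set q := ‖m - z + (Q / a ^ 2) • h‖
  have hQ : Q / a ^ 2 * a ^ 2 = Q := by
    rcases eq_or_ne a 0 with ha | ha
    · simp [Q, norm_eq_zero.1 ha]
    · field_simp
  have hq2 : q ^ 2 = 1 - 2 * P + μ ^ 2 - Q / a ^ 2 * Q := by
    rw [← real_inner_self_eq_norm_sq]
    simp only [inner_add_left, inner_sub_left, inner_add_right, inner_sub_right,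
      real_inner_smul_left, real_inner_smul_right, real_inner_comm m z, real_inner_comm h z,
      real_inner_comm m h, hmh, real_inner_self_eq_norm_sq, hz, norm_smul, Real.norm_eq_abs,
      mul_pow, sq_abs]
    linear_combination (Q / a ^ 2) * hQ
  have hqE : q ^ 2 ≤ 1 - 2 * P + μ ^ 2 := by
    have : Q / a ^ 2 * Q = (Q / a ^ 2) ^ 2 * a ^ 2 := by linear_combination (-(Q / a ^ 2)) * hQ
    nlinarith [sq_nonneg (Q / a ^ 2)]
  have hqm : P - μ ^ 2 ≤ μ * q := by
    have hinner : ⟪m - z + (Q / a ^ 2) • h, m⟫ = μ ^ 2 - P := by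
      simp only [inner_add_left, inner_sub_left, real_inner_smul_left, real_inner_comm m z,
        real_inner_comm m h, hmh, real_inner_self_eq_norm_sq]
      ring
    have := (abs_le.1 (abs_real_inner_le_norm (m - z + (Q / a ^ 2) • h) m)).1
    rw [hinner] at this
    linarith
  have hμ1 : μ < 1 := by nlinarith [norm_nonneg m, sq_nonneg a]
  have hsub_pos : ∀ v : V, ‖v‖ ^ 2 < 1 → 0 < ‖v - z‖ := fun v hv => by
    nlinarith [norm_sub_norm_le z v, norm_sub_rev z v, norm_nonneg v]
  have hAB : 0 < ‖m + h - z‖ * ‖m - h - z‖ := by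
    refine mul_pos (hsub_pos _ ?_) (hsub_pos _ ?_)
    · rw [norm_add_sq_real, hmh]; linarith
    · rw [norm_sub_sq_real, hmh]; linarith
  have hD : 0 < (1 - μ) ^ 2 + a ^ 2 := by nlinarith
  rw [div_le_div_iff₀ hD hAB]
  refine mul_le_mul_of_cot_le (c := 4 * a ^ 2) (norm_nonneg _) (sub_pos.2 hμ1) (by positivity)
    hAB.le hD.le ?_ (by ring) (cot_bound (norm_nonneg m) hlt.le (norm_nonneg _) hPμ hqm hqE)
  rw [mul_pow, hA, hB, hq2]
  linear_combination (4 * Q) * hQ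

theorem inner_div_norm_mul_norm_eq_of_inner_eq {m h z : V} (hmh : ⟪m, h⟫ = 0) (hz : ‖z‖ = 1)
    (hmz : ⟪m, z⟫ = ‖m‖) (hhz : ⟪h, z⟫ = 0) :
    ⟪m + h - z, m - h - z⟫ / (‖m + h - z‖ * ‖m - h - z‖) =
      ((1 - ‖m‖) ^ 2 - ‖h‖ ^ 2) / ((1 - ‖m‖) ^ 2 + ‖h‖ ^ 2) := by
  have hA := norm_add_sub_sq_of_inner_eq_zero hmh z
  have hB := norm_add_sub_sq_of_inner_eq_zero (h := -h) (by rw [inner_neg_right, hmh, neg_zero]) z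
  rw [← sub_eq_add_neg, norm_neg, inner_neg_left, hz, hmz, hhz] at hB
  rw [hz, hmz, hhz] at hA
  have hAB : ‖m + h - z‖ = ‖m - h - z‖ := by
    rw [← sq_eq_sq₀ (norm_nonneg _) (norm_nonneg _), hA, hB]; ring
  rw [inner_add_sub_sub_sub, ← hAB, ← sq, hA, hz, hmz]
  ring_nf

theorem isGreatest_angle_sphere {m h : V} (hmh : ⟪m, h⟫ = 0) (hlt : ‖m‖ ^ 2 + ‖h‖ ^ 2 < 1)
    (hz : ∃ z : V, ‖z‖ = 1 ∧ ⟪m, z⟫ = ‖m‖ ∧ ⟪h, z⟫ = 0) :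
    IsGreatest ((fun z => EuclideanGeometry.angle (m + h) z (m - h)) '' sphere 0 1)
      (2 * arctan (‖h‖ / (1 - ‖m‖))) := by
  have hμ : 1 - ‖m‖ ≠ 0 := by nlinarith [norm_nonneg m, sq_nonneg ‖h‖]
  have hα : 2 * arctan (‖h‖ / (1 - ‖m‖)) =
      arccos (((1 - ‖m‖) ^ 2 - ‖h‖ ^ 2) / ((1 - ‖m‖) ^ 2 + ‖h‖ ^ 2)) := by
    rw [← arccos_one_sub_sq_div_one_add_sq (div_nonneg (norm_nonneg h) (by nlinarith))]
    congr 1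
    field_simp
  have hangle (z : V) : EuclideanGeometry.angle (m + h) z (m - h) =
      arccos (⟪m + h - z, m - h - z⟫ / (‖m + h - z‖ * ‖m - h - z‖)) := rfl
  obtain ⟨z, hz1, hmz, hhz⟩ := hz
  rw [hα]
  refine ⟨⟨z, mem_sphere_zero_iff_norm.2 hz1, ?_⟩, ?_⟩
  · exact (hangle z).trans
      (congrArg arccos (inner_div_norm_mul_norm_eq_of_inner_eq hmh hz1 hmz hhz))
  · rintro _ ⟨w, hw, rfl⟩
    exact arccos_le_arccos
      (le_inner_div_norm_mul_norm_of_norm_eq_one hmh hlt (mem_sphere_zero_iff_norm.1 hw))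

theorem exists_norm_eq_one_inner_eq_zero [FiniteDimensional ℝ V]
    (hV : 2 ≤ Module.finrank ℝ V) (v : V) : ∃ z : V, ‖z‖ = 1 ∧ ⟪v, z⟫ = 0 := by
  have : Nontrivial (ℝ ∙ v)ᗮ := by
    apply Module.nontrivial_of_finrank_pos (R := ℝ)
    have := (ℝ ∙ v).finrank_add_finrank_orthogonal
    have : Module.finrank ℝ (ℝ ∙ v) ≤ 1 := (finrank_span_le_card ({v} : Set V)).trans (by simp)
    omega
  obtain ⟨z, hz⟩ := exists_norm_eq (ℝ ∙ v)ᗮ zero_le_one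
  exact ⟨z, hz, Submodule.mem_orthogonal_singleton_iff_inner_right.1 z.2⟩

theorem exists_norm_eq_one_inner_eq_norm_inner_eq_zero [FiniteDimensional ℝ V]
    (hV : 2 ≤ Module.finrank ℝ V) {m h : V} (hmh : ⟪m, h⟫ = 0) :
    ∃ z : V, ‖z‖ = 1 ∧ ⟪m, z⟫ = ‖m‖ ∧ ⟪h, z⟫ = 0 := by
  rcases eq_or_ne m 0 with rfl | hm
  · simpa using exists_norm_eq_one_inner_eq_zero hV h
  · refine ⟨‖m‖⁻¹ • m, ?_, ?_, ?_⟩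
    · rw [norm_smul, norm_inv, norm_norm, inv_mul_cancel₀ (norm_ne_zero_iff.2 hm)]
    · rw [real_inner_smul_right, real_inner_self_eq_norm_sq]
      field_simp
    · rw [real_inner_smul_right, real_inner_comm, hmh, mul_zero]

theorem visualAngle_eq_of_norm_eq_general {n : ℕ} (hn : 2 ≤ n)
    (x y : EuclideanSpace ℝ (Fin n))
    (hx : x ∈ ball (0 : EuclideanSpace ℝ (Fin n)) 1)
    (hnorm : ‖x‖ = ‖y‖)
    (θ : ℝ) (hθ : θ = EuclideanGeometry.angle x 0 y / 2) :
    visualAngle (ball (0 : EuclideanSpace ℝ (Fin n)) 1) x y =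
      2 * Real.arctan (‖x‖ * Real.sin θ / (1 - ‖x‖ * Real.cos θ)) := by
  have hθ' : θ = InnerProductGeometry.angle x y / 2 := by
    simpa [EuclideanGeometry.angle] using hθ
  set m : EuclideanSpace ℝ (Fin n) := (2 : ℝ)⁻¹ • (x + y)
  set h : EuclideanSpace ℝ (Fin n) := (2 : ℝ)⁻¹ • (x - y)
  have hmh : ⟪m, h⟫ = 0 := by
    rw [real_inner_smul_left, real_inner_smul_right, (real_inner_add_sub_eq_zero_iff x y).2 hnorm,
      mul_zero, mul_zero]
  have hm : ‖m‖ = ‖x‖ * cos θ := hθ' ▸ norm_smul_add_eq_mul_cos hnorm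
  have hh : ‖h‖ = ‖x‖ * sin θ := hθ' ▸ norm_smul_sub_eq_mul_sin hnorm
  have hlt : ‖m‖ ^ 2 + ‖h‖ ^ 2 < 1 := by
    rw [hm, hh, mul_pow, mul_pow, ← mul_add, cos_sq_add_sin_sq, mul_one]
    exact pow_lt_one₀ (norm_nonneg x) (mem_ball_zero_iff.1 hx) two_ne_zero
  have hdim : 2 ≤ Module.finrank ℝ (EuclideanSpace ℝ (Fin n)) := by simpa using hn
  have : Nontrivial (EuclideanSpace ℝ (Fin n)) :=
    Module.nontrivial_of_finrank_pos (R := ℝ) (by omega)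
  have key := isGreatest_angle_sphere hmh hlt
    (exists_norm_eq_one_inner_eq_norm_inner_eq_zero hdim hmh)
  rw [show m + h = x by simp only [m, h]; module, show m - h = y by simp only [m, h]; module,
    hm, hh] at key
  rw [visualAngle, frontier_ball 0 one_ne_zero]
  exact key.csSup_eq

/-- In the unit ball, for `|x| = |y| ≠ 0` and `θ = ∠(x,0,y)/2 ∈ (0, π/2]`,
`v(x,y) = 2 arctan(|x| sin θ / (1 − |x| cos θ))`. -/
theorem visualAngle_eq_of_norm_eq {n : ℕ} (hn : 2 ≤ n)
    (x y : EuclideanSpace ℝ (Fin n))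
    (hx : x ∈ ball (0 : EuclideanSpace ℝ (Fin n)) 1)
    (hy : y ∈ ball (0 : EuclideanSpace ℝ (Fin n)) 1)
    (hnorm : ‖x‖ = ‖y‖) (hx0 : x ≠ 0)
    (θ : ℝ) (hθ : θ = EuclideanGeometry.angle x 0 y / 2) (hθmem : θ ∈ Ioc 0 (π / 2)) :
    visualAngle (ball (0 : EuclideanSpace ℝ (Fin n)) 1) x y =
      2 * Real.arctan (‖x‖ * Real.sin θ / (1 - ‖x‖ * Real.cos θ)) :=
  visualAngle_eq_of_norm_eq_general hn x y hx hnorm θ hθ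
end

section
/- The function f(r) = arcsin r / log(1+r) is strictly increasing on (0,1), with limit 1 as r → 0⁺ and value π/log 4 as r → 1⁻. In particular, for all r ∈ (0,1), log(1+r) ≤ arcsin r ≤ (π/log 4) log(1+r). -/
/-!
Write `f = arcsin` and `g r = log (1 + r)`; both vanish at `0`, and the quotient of their
derivatives, `(1 + r) / √(1 - r ^ 2) = √((1 + r) / (1 - r))`, is strictly increasing on
`(0, 1)`.
By Cauchy's mean value theorem `f r / g r = f' c / g' c` for some `c ∈ (0, r)`, which is below
`f' r / g' r`; this is exactly the positivity of the derivative of `f / g` (the monotone form of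
l'Hôpital's rule). The limit at `0` is l'Hôpital's rule, the one at `1` is continuity, since
`arcsin 1 / log 2 = π / log 4`, and the two bounds follow from monotonicity.
-/

open Real Set Filter Topology

section MonotoneLimits

variable {α β : Type*} [LinearOrder α] [TopologicalSpace α] [OrderTopology α]
  [DenselyOrdered α] [LinearOrder β] [TopologicalSpace β] [OrderClosedTopology β]
  {f : α → β} {a b x : α} {l : β}

theorem StrictMonoOn.lt_of_tendsto_nhdsGT [NoMaxOrder α] (hf : StrictMonoOn f (Ioo a b))
    (hl : Tendsto f (𝓝[>] a) (𝓝 l)) (hx : x ∈ Ioo a b) : l < f x := by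
  obtain ⟨y, hay, hyx⟩ := exists_between hx.1
  have hy : y ∈ Ioo a b := ⟨hay, hyx.trans hx.2⟩
  have : l ≤ f y := le_of_tendsto hl <| by
    filter_upwards [Ioo_mem_nhdsGT hay] with z hz
    exact (hf ⟨hz.1, hz.2.trans hy.2⟩ hy hz.2).le
  exact this.trans_lt (hf hy hx hyx)

theorem StrictMonoOn.lt_of_tendsto_nhdsLT [NoMinOrder α] (hf : StrictMonoOn f (Ioo a b))
    (hl : Tendsto f (𝓝[<] b) (𝓝 l)) (hx : x ∈ Ioo a b) : f x < l := by
  obtain ⟨y, hxy, hyb⟩ := exists_between hx.2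
  have hy : y ∈ Ioo a b := ⟨hx.1.trans hxy, hyb⟩
  have : f y ≤ l := ge_of_tendsto hl <| by
    filter_upwards [Ioo_mem_nhdsLT hyb] with z hz
    exact (hf hy ⟨hy.1.trans hz.1, hz.2⟩ hz.1).le
  exact (hf hx hy hxy).trans_le this

end MonotoneLimits

theorem strictMonoOn_of_hasDerivAt_pos {D : Set ℝ} (hD : Convex ℝ D) (hDo : IsOpen D)
    {f f' : ℝ → ℝ} (hff' : ∀ x ∈ D, HasDerivAt f (f' x) x) (hf' : ∀ x ∈ D, 0 < f' x) :
    StrictMonoOn f D := by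
  refine strictMonoOn_of_hasDerivWithinAt_pos (f' := f') hD
    (fun x hx => (hff' x hx).continuousAt.continuousWithinAt) ?_ ?_ <;> rw [hDo.interior_eq]
  exacts [fun x hx => (hff' x hx).hasDerivWithinAt, hf']

namespace HasDerivAt

variable {f g f' g' : ℝ → ℝ} {a b : ℝ}

theorem pos_of_tendsto_nhdsGT_zero (hgg' : ∀ x ∈ Ioo a b, HasDerivAt g (g' x) x)
    (hg' : ∀ x ∈ Ioo a b, 0 < g' x) (hga : Tendsto g (𝓝[>] a) (𝓝 0)) {x : ℝ}
    (hx : x ∈ Ioo a b) : 0 < g x :=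
  (strictMonoOn_of_hasDerivAt_pos (convex_Ioo a b) isOpen_Ioo hgg' hg').lt_of_tendsto_nhdsGT
    hga hx

theorem div_lt_div_of_strictMonoOn_div (hff' : ∀ x ∈ Ioo a b, HasDerivAt f (f' x) x)
    (hgg' : ∀ x ∈ Ioo a b, HasDerivAt g (g' x) x) (hg' : ∀ x ∈ Ioo a b, 0 < g' x)
    (hfa : Tendsto f (𝓝[>] a) (𝓝 0)) (hga : Tendsto g (𝓝[>] a) (𝓝 0))
    (hmono : StrictMonoOn (fun x => f' x / g' x) (Ioo a b)) {x : ℝ} (hx : x ∈ Ioo a b) :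
    f x / g x < f' x / g' x := by
  have hsub : Ioo a x ⊆ Ioo a b := Ioo_subset_Ioo_right hx.2.le
  obtain ⟨c, hc, hcx⟩ := exists_ratio_hasDerivAt_eq_ratio_slope' f f' hx.1 g g'
    (fun y hy => hff' y (hsub hy)) (fun y hy => hgg' y (hsub hy)) hfa hga
    ((hff' x hx).continuousAt.tendsto.mono_left nhdsWithin_le_nhds)
    ((hgg' x hx).continuousAt.tendsto.mono_left nhdsWithin_le_nhds)
  calc f x / g x = f' c / g' c := by
        rw [div_eq_div_iff (pos_of_tendsto_nhdsGT_zero hgg' hg' hga hx).ne'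
          (hg' c (hsub hc)).ne']
        linarith
    _ < f' x / g' x := hmono (hsub hc) hx hc.2

theorem strictMonoOn_div_of_strictMonoOn_div (hff' : ∀ x ∈ Ioo a b, HasDerivAt f (f' x) x)
    (hgg' : ∀ x ∈ Ioo a b, HasDerivAt g (g' x) x) (hg' : ∀ x ∈ Ioo a b, 0 < g' x)
    (hfa : Tendsto f (𝓝[>] a) (𝓝 0)) (hga : Tendsto g (𝓝[>] a) (𝓝 0))
    (hmono : StrictMonoOn (fun x => f' x / g' x) (Ioo a b)) :
    StrictMonoOn (fun x => f x / g x) (Ioo a b) := by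
  have hg := fun x (hx : x ∈ Ioo a b) => pos_of_tendsto_nhdsGT_zero hgg' hg' hga hx
  refine strictMonoOn_of_hasDerivAt_pos (convex_Ioo a b) isOpen_Ioo
    (fun x hx => (hff' x hx).div (hgg' x hx) (hg x hx).ne') fun x hx => ?_
  have := div_lt_div_of_strictMonoOn_div hff' hgg' hg' hfa hga hmono hx
  rw [div_lt_div_iff₀ (hg x hx) (hg' x hx)] at this
  exact div_pos (by linarith) (pow_pos (hg x hx) 2)

end HasDerivAt

theorem hasDerivAt_log_one_add {x : ℝ} (hx : 1 + x ≠ 0) :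
    HasDerivAt (fun y => log (1 + y)) (1 / (1 + x)) x :=
  ((hasDerivAt_id' x).const_add 1).log hx

theorem tendsto_log_one_add_nhdsGT_zero :
    Tendsto (fun y : ℝ => log (1 + y)) (𝓝[>] 0) (𝓝 0) := by
  simpa using ((continuousAt_const.add continuousAt_id).log (by norm_num) :
    ContinuousAt (fun y : ℝ => log (1 + y)) 0).tendsto.mono_left nhdsWithin_le_nhds

theorem tendsto_arcsin_nhdsGT_zero : Tendsto arcsin (𝓝[>] 0) (𝓝 0) :=
  (continuous_arcsin.tendsto' 0 0 arcsin_zero).mono_left nhdsWithin_le_nhds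

theorem one_div_sqrt_one_sub_sq_div_one_div_one_add {x : ℝ} (hx : x ∈ Ioo (-1 : ℝ) 1) :
    1 / √(1 - x ^ 2) / (1 / (1 + x)) = √((1 + x) / (1 - x)) := by
  have hp : 0 < 1 + x := by linarith [hx.1]
  have hm : 0 < √(1 - x) := Real.sqrt_pos.2 (by linarith [hx.2])
  have hp' : 0 < √(1 + x) := Real.sqrt_pos.2 hp
  have hsq := Real.sq_sqrt hp.le
  rw [show 1 - x ^ 2 = (1 + x) * (1 - x) by ring, Real.sqrt_mul hp.le, Real.sqrt_div hp.le]
  field_simp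
  exact hsq.symm

theorem strictMonoOn_sqrt_one_add_div_one_sub :
    StrictMonoOn (fun x : ℝ => √((1 + x) / (1 - x))) (Ico (-1) 1) := by
  intro x hx y hy hxy
  have hx' : 0 < 1 - x := by linarith [hx.2]
  have hy' : 0 < 1 - y := by linarith [hy.2]
  refine Real.sqrt_lt_sqrt (div_nonneg (by linarith [hx.1]) hx'.le) ?_
  rw [div_lt_div_iff₀ hx' hy']
  nlinarith

theorem strictMonoOn_arcsin_div_log_one_add :
    StrictMonoOn (fun r : ℝ => arcsin r / log (1 + r)) (Ioo 0 1) := by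
  refine HasDerivAt.strictMonoOn_div_of_strictMonoOn_div
    (fun x hx => hasDerivAt_arcsin (by linarith [hx.1]) hx.2.ne)
    (fun x hx => hasDerivAt_log_one_add (by linarith [hx.1]))
    (fun x hx => one_div_pos.2 (by linarith [hx.1]))
    tendsto_arcsin_nhdsGT_zero tendsto_log_one_add_nhdsGT_zero ?_
  refine (strictMonoOn_sqrt_one_add_div_one_sub.mono ?_).congr fun x hx => ?_
  · exact Ioo_subset_Ico_self.trans (Ico_subset_Ico_left (by norm_num))
  · exact (one_div_sqrt_one_sub_sq_div_one_div_one_add ⟨by linarith [hx.1], hx.2⟩).symm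

theorem tendsto_arcsin_div_log_one_add_nhdsGT_zero :
    Tendsto (fun r : ℝ => arcsin r / log (1 + r)) (𝓝[>] 0) (𝓝 1) := by
  refine HasDerivAt.lhopital_zero_right_on_Ioo zero_lt_one
    (fun x hx => hasDerivAt_arcsin (by linarith [hx.1]) hx.2.ne)
    (fun x hx => hasDerivAt_log_one_add (by linarith [hx.1]))
    (fun x hx => (one_div_pos.2 (by linarith [hx.1])).ne')
    tendsto_arcsin_nhdsGT_zero tendsto_log_one_add_nhdsGT_zero ?_
  have : ContinuousAt (fun x : ℝ => 1 / √(1 - x ^ 2) / (1 / (1 + x))) 0 := by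
    fun_prop (disch := norm_num)
  simpa using this.tendsto.mono_left nhdsWithin_le_nhds

theorem tendsto_arcsin_div_log_one_add_nhdsLT_one :
    Tendsto (fun r : ℝ => arcsin r / log (1 + r)) (𝓝[<] 1) (𝓝 (π / log 4)) := by
  have : ContinuousAt (fun r : ℝ => arcsin r / log (1 + r)) 1 := by
    fun_prop (disch := norm_num)
  convert this.tendsto.mono_left nhdsWithin_le_nhds using 2
  rw [arcsin_one, one_add_one_eq_two, show (4 : ℝ) = 2 ^ 2 by norm_num, log_pow]
  push_cast
  ring

/-- `r ↦ arcsin r / log(1+r)` is strictly increasing on `(0,1)`, with limit `1` as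
`r → 0⁺` and limit `π / log 4` as `r → 1⁻`; consequently
`log(1+r) ≤ arcsin r ≤ (π/log 4) log(1+r)` on `(0,1)`. -/
theorem strictMonoOn_arcsin_div_log :
    StrictMonoOn (fun r : ℝ => Real.arcsin r / Real.log (1 + r)) (Ioo 0 1) ∧
    Tendsto (fun r : ℝ => Real.arcsin r / Real.log (1 + r)) (𝓝[>] 0) (𝓝 1) ∧
    Tendsto (fun r : ℝ => Real.arcsin r / Real.log (1 + r)) (𝓝[<] 1)
      (𝓝 (π / Real.log 4)) ∧
    ∀ r ∈ Ioo (0:ℝ) 1,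
      Real.log (1 + r) ≤ Real.arcsin r ∧
      Real.arcsin r ≤ π / Real.log 4 * Real.log (1 + r) := by
  refine ⟨strictMonoOn_arcsin_div_log_one_add, tendsto_arcsin_div_log_one_add_nhdsGT_zero,
    tendsto_arcsin_div_log_one_add_nhdsLT_one, fun r hr => ?_⟩
  have hlog : 0 < log (1 + r) := log_pos (by linarith [hr.1])
  have hlower := strictMonoOn_arcsin_div_log_one_add.lt_of_tendsto_nhdsGT
    tendsto_arcsin_div_log_one_add_nhdsGT_zero hr
  have hupper := strictMonoOn_arcsin_div_log_one_add.lt_of_tendsto_nhdsLT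
    tendsto_arcsin_div_log_one_add_nhdsLT_one hr
  rw [one_lt_div hlog] at hlower
  rw [div_lt_iff₀ hlog] at hupper
  exact ⟨hlower.le, hupper.le⟩
end

section
/- For L ≥ 1 and ε ∈ (0,1), the function f(r) = artanh(4L r)/artanh r is strictly increasing on (0, ε/(4L)), with limit 4L as r → 0⁺ and value artanh(ε)/artanh(ε/(4L)) at r = ε/(4L). In particular, artanh(4L r) ≤ (artanh ε / artanh(ε/(4L))) · artanh r for all r ∈ (0, ε/(4L)]. -/
/-! Write `f r = artanh (a r) / artanh r` with `a = 4L > 1`. The sign of `f'` is that of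
`H r = a (1 - r²) artanh r - (1 - (a r)²) artanh (a r)`, and `H 0 = 0` while
`H' r = 2 a r (a artanh (a r) - artanh r) > 0` on `(0, 1/a)` because `artanh` is increasing;
hence `f` is strictly increasing there. The limit at `0⁺` is the ratio `a / 1` of the
derivatives of numerator and denominator at `0`, both of which vanish there. -/

open Real Set Filter Topology

/-- The inverse hyperbolic tangent. -/
noncomputable def artanh (r : ℝ) : ℝ := (1 / 2) * Real.log ((1 + r) / (1 - r))

lemma artanh_eq_real_artanh {x : ℝ} (hx : x ∈ Icc (-1) 1) : _root_.artanh x = Real.artanh x :=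
  (Real.artanh_eq_half_log hx).symm

lemma artanh_zero : _root_.artanh 0 = 0 := by
  simp [_root_.artanh]

lemma artanh_lt_artanh {x y : ℝ} (hx : -1 < x) (hy : y < 1) (hxy : x < y) :
    _root_.artanh x < _root_.artanh y := by
  rw [artanh_eq_real_artanh ⟨hx.le, by linarith⟩, artanh_eq_real_artanh ⟨by linarith, hy.le⟩]
  exact Real.artanh_lt_artanh hx hy hxy

lemma artanh_pos {x : ℝ} (hx : x ∈ Ioo 0 1) : 0 < _root_.artanh x := by
  rw [artanh_eq_real_artanh ⟨by linarith [hx.1], hx.2.le⟩]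
  exact Real.artanh_pos hx

lemma hasDerivAt_artanh {x : ℝ} (hx : x ∈ Ioo (-1) 1) :
    HasDerivAt _root_.artanh (1 - x ^ 2)⁻¹ x := by
  have h₁ : 1 - x ≠ 0 := by linarith [hx.2]
  have h₂ : 1 + x ≠ 0 := by linarith [hx.1]
  have hq : HasDerivAt (fun y => (1 + y) / (1 - y)) (2 / (1 - x) ^ 2) x :=
    (((hasDerivAt_id' x).const_add 1).div ((hasDerivAt_id' x).const_sub 1) h₁).congr_deriv
      (by ring)
  have h₃ : 1 - x ^ 2 ≠ 0 := by
    rw [show 1 - x ^ 2 = (1 - x) * (1 + x) by ring]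
    exact mul_ne_zero h₁ h₂
  refine ((hq.log (div_ne_zero h₂ h₁)).const_mul (1 / 2)).congr_deriv ?_
  field_simp
  ring

lemma hasDerivAt_artanh_const_mul (a : ℝ) {x : ℝ} (hx : a * x ∈ Ioo (-1) 1) :
    HasDerivAt (fun t => _root_.artanh (a * t)) (a * (1 - (a * x) ^ 2)⁻¹) x :=
  (hasDerivAt_artanh hx).comp x ((hasDerivAt_id' x).const_mul a) |>.congr_deriv (by ring)

lemma hasDerivAt_artanh_defect (a : ℝ) {t : ℝ} (ht : t ∈ Ioo (-1) 1) (hat : a * t ∈ Ioo (-1) 1) :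
    HasDerivAt
      (fun s => a * (1 - s ^ 2) * _root_.artanh s - (1 - (a * s) ^ 2) * _root_.artanh (a * s))
      (2 * a * t * (a * _root_.artanh (a * t) - _root_.artanh t)) t := by
  have h₁ : 1 - t ^ 2 ≠ 0 := by nlinarith [ht.1, ht.2]
  have h₂ : 1 - (a * t) ^ 2 ≠ 0 := by nlinarith [hat.1, hat.2]
  have hA := (((hasDerivAt_pow 2 t).const_sub 1).const_mul a).mul (hasDerivAt_artanh ht)
  have hB := ((((hasDerivAt_id' t).const_mul a).pow 2).const_sub 1).mul
    (hasDerivAt_artanh_const_mul a hat)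
  refine (hA.sub hB).congr_deriv ?_
  simp only [Pi.pow_apply]
  linear_combination a * mul_inv_cancel₀ h₁ - a * mul_inv_cancel₀ h₂

lemma one_sub_sq_mul_artanh_mul_lt {a r : ℝ} (ha : 1 < a) (hr : 0 < r) (har : a * r < 1) :
    (1 - (a * r) ^ 2) * _root_.artanh (a * r) < a * (1 - r ^ 2) * _root_.artanh r := by
  have hmem : ∀ t ∈ Icc 0 r, t ∈ Ioo (-1) 1 ∧ a * t ∈ Ioo (-1) 1 := fun t ht => by
    have : a * t ≤ a * r := by nlinarith [ht.2]
    constructor <;> constructor <;> nlinarith [ht.1]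
  have hderiv := fun t ht => hasDerivAt_artanh_defect a (hmem t ht).1 (hmem t ht).2
  have hmono := strictMonoOn_of_deriv_pos (convex_Icc 0 r)
    (fun t ht => (hderiv t ht).continuousAt.continuousWithinAt) fun t ht => by
      rw [interior_Icc] at ht
      rw [(hderiv t (Ioo_subset_Icc_self ht)).deriv]
      obtain ⟨ht₀, hat₁⟩ := (hmem t (Ioo_subset_Icc_self ht)).2
      have hlt : _root_.artanh t < _root_.artanh (a * t) :=
        _root_.artanh_lt_artanh (by linarith [ht.1]) hat₁ (by nlinarith [ht.1])
      have hpos : 0 < _root_.artanh (a * t) := _root_.artanh_pos ⟨by nlinarith [ht.1], hat₁⟩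
      have h2at : 0 < 2 * a * t := by nlinarith [ht.1]
      exact mul_pos h2at (by nlinarith)
  simpa [_root_.artanh_zero] using hmono (left_mem_Icc.2 hr.le) (right_mem_Icc.2 hr.le) hr

lemma strictMonoOn_artanh_const_mul_div_artanh {a : ℝ} (ha : 1 < a) :
    StrictMonoOn (fun r => _root_.artanh (a * r) / _root_.artanh r) (Ioo 0 a⁻¹) := by
  have hmem : ∀ r ∈ Ioo 0 a⁻¹, r ∈ Ioo 0 1 ∧ a * r ∈ Ioo 0 1 := fun r hr => by
    have h₁ : a * r < 1 := by
      simpa [mul_inv_cancel₀ (by positivity : a ≠ 0)] using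
        mul_lt_mul_of_pos_left hr.2 (by positivity : 0 < a)
    exact ⟨⟨hr.1, by nlinarith [hr.1]⟩, ⟨by nlinarith [hr.1], h₁⟩⟩
  have hderiv : ∀ r ∈ Ioo 0 a⁻¹, HasDerivAt (fun r => _root_.artanh (a * r) / _root_.artanh r)
      ((a * (1 - (a * r) ^ 2)⁻¹ * _root_.artanh r - _root_.artanh (a * r) * (1 - r ^ 2)⁻¹) /
        _root_.artanh r ^ 2) r := fun r hr =>
    (hasDerivAt_artanh_const_mul a (Ioo_subset_Ioo_left (by norm_num) (hmem r hr).2)).div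
      (hasDerivAt_artanh (Ioo_subset_Ioo_left (by norm_num) (hmem r hr).1))
      (_root_.artanh_pos (hmem r hr).1).ne'
  refine strictMonoOn_of_deriv_pos (convex_Ioo 0 a⁻¹)
    (fun r hr => (hderiv r hr).continuousAt.continuousWithinAt) fun r hr => ?_
  rw [interior_Ioo] at hr
  obtain ⟨⟨hr₀, hr₁⟩, har₀, har₁⟩ := hmem r hr
  have hX : 0 < 1 - (a * r) ^ 2 := by nlinarith
  have hY : 0 < 1 - r ^ 2 := by nlinarith
  have hnum : a * (1 - (a * r) ^ 2)⁻¹ * _root_.artanh r - _root_.artanh (a * r) * (1 - r ^ 2)⁻¹ =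
      (a * (1 - r ^ 2) * _root_.artanh r - (1 - (a * r) ^ 2) * _root_.artanh (a * r)) /
        ((1 - (a * r) ^ 2) * (1 - r ^ 2)) := by
    rw [mul_pow] at hX ⊢
    field_simp
  rw [(hderiv r hr).deriv, hnum]
  have hH := one_sub_sq_mul_artanh_mul_lt ha hr₀ har₁
  have hpos := _root_.artanh_pos ⟨hr₀, hr₁⟩
  positivity

lemma HasDerivAt.tendsto_div_nhdsNE {𝕜 : Type*} [NontriviallyNormedField 𝕜] {f g : 𝕜 → 𝕜}
    {a b x : 𝕜} (hf : HasDerivAt f a x) (hg : HasDerivAt g b x) (hfx : f x = 0) (hgx : g x = 0)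
    (hb : b ≠ 0) : Tendsto (fun t => f t / g t) (𝓝[≠] x) (𝓝 (a / b)) := by
  refine (hf.tendsto_slope.div hg.tendsto_slope hb).congr' ?_
  filter_upwards [self_mem_nhdsWithin] with t ht
  rw [Pi.div_apply, slope_def_field, slope_def_field, hfx, hgx, sub_zero, sub_zero]
  exact div_div_div_cancel_right₀ (sub_ne_zero.2 ht) _ _

lemma tendsto_artanh_const_mul_div_artanh (a : ℝ) :
    Tendsto (fun r => _root_.artanh (a * r) / _root_.artanh r) (𝓝[≠] 0) (𝓝 a) := by
  simpa using (hasDerivAt_artanh_const_mul a (by simp)).tendsto_div_nhdsNE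
    (hasDerivAt_artanh (by simp)) (by simp [_root_.artanh_zero]) _root_.artanh_zero (by simp)

/-- For `L ≥ 1` and `ε ∈ (0,1)`, `r ↦ artanh(4Lr)/artanh r` is strictly increasing on
`(0, ε/(4L))`, with limit `4L` as `r → 0⁺` and value `artanh ε / artanh(ε/(4L))` at
`r = ε/(4L)`; in particular `artanh(4Lr) ≤ (artanh ε / artanh(ε/(4L))) artanh r` on
`(0, ε/(4L)]`. -/
theorem strictMonoOn_artanh_mul_div_artanh (L ε : ℝ) (hL : 1 ≤ L) (hε : ε ∈ Ioo (0:ℝ) 1) :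
    StrictMonoOn (fun r : ℝ => _root_.artanh (4 * L * r) / _root_.artanh r) (Ioo 0 (ε / (4 * L))) ∧
    Tendsto (fun r : ℝ => _root_.artanh (4 * L * r) / _root_.artanh r) (𝓝[>] 0) (𝓝 (4 * L)) ∧
    _root_.artanh (4 * L * (ε / (4 * L))) / _root_.artanh (ε / (4 * L)) =
      _root_.artanh ε / _root_.artanh (ε / (4 * L)) ∧
    ∀ r ∈ Ioc 0 (ε / (4 * L)),
      _root_.artanh (4 * L * r) ≤ _root_.artanh ε / _root_.artanh (ε / (4 * L)) * _root_.artanh r := by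
  have ha : 1 < 4 * L := by linarith
  have ha₀ : 0 < 4 * L := by linarith
  have hcancel : 4 * L * (ε / (4 * L)) = ε := mul_div_cancel₀ ε ha₀.ne'
  have hmono := strictMonoOn_artanh_const_mul_div_artanh ha
  have hsub : Ioc 0 (ε / (4 * L)) ⊆ Ioo 0 (4 * L)⁻¹ := Ioc_subset_Ioo_right <| by
    rw [div_eq_mul_inv]
    exact mul_lt_of_lt_one_left (inv_pos.2 ha₀) hε.2
  refine ⟨hmono.mono (Ioo_subset_Ioc_self.trans hsub),
    (tendsto_artanh_const_mul_div_artanh _).mono_left (nhdsWithin_mono _ fun r hr => ne_of_gt hr),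
    by rw [hcancel], fun r hr => ?_⟩
  have hm : ε / (4 * L) ∈ Ioc 0 (ε / (4 * L)) := right_mem_Ioc.2 (div_pos hε.1 ha₀)
  have hratio := hmono.monotoneOn (hsub hr) (hsub hm) hr.2
  rw [hcancel] at hratio
  have hr₁ : r < 1 := (hsub hr).2.trans (inv_lt_one_of_one_lt₀ ha)
  exact (div_le_iff₀ (_root_.artanh_pos ⟨hr.1, hr₁⟩)).1 hratio
end

section
/- (Monotone l'Hôpital rule) Let −∞ < a < b < ∞ and f, g : [a,b] → ℝ continuous on [a,b] and differentiable on (a,b) with g'(x) ≠ 0 on (a,b). If f'/g' is (strictly) increasing on (a,b), then the functions x ↦ (f(x)−f(a))/(g(x)−g(a)) and x ↦ (f(x)−f(b))/(g(x)−g(b)) are (strictly) increasing on (a,b); analogously for decreasing. -/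
/-!
For `a ≤ p < q < r ≤ b`, the chord slope `(f r - f p) / (g r - g p)` of the curve `t ↦ (g t, f t)`
is the mediant of the slopes over `[p, q]` and `[q, r]`, with positive weights because `g` is
strictly monotone (Rolle, as `g' ≠ 0`); so it lies between them. By Cauchy's mean value theorem
these two slopes are values of `f' / g'` at points `c < d`, hence are ordered when `f' / g'` is
monotone. Taking `(p, q, r) = (a, x, y)` and `(x, y, b)` gives the two claims; the decreasing
case follows by replacing `f` with `-f`.
-/

open Set

theorem add_div_add_mem_openSegment {𝕜 : Type*} [Field 𝕜] [LinearOrder 𝕜] [IsStrictOrderedRing 𝕜]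
    {u v u' v' : 𝕜} (hvv' : 0 < v * v') :
    (u + u') / (v + v') ∈ openSegment 𝕜 (u / v) (u' / v') := by
  have hv : v ≠ 0 := left_ne_zero_of_mul hvv'.ne'
  have hv' : v' ≠ 0 := right_ne_zero_of_mul hvv'.ne'
  obtain ⟨hs, hw, hw'⟩ : v + v' ≠ 0 ∧ 0 < v / (v + v') ∧ 0 < v' / (v + v') := by
    rcases mul_pos_iff.1 hvv' with ⟨h, h'⟩ | ⟨h, h'⟩
    · exact ⟨(add_pos h h').ne', div_pos h (add_pos h h'), div_pos h' (add_pos h h')⟩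
    · exact ⟨(add_neg h h').ne, div_pos_of_neg_of_neg h (add_neg h h'),
        div_pos_of_neg_of_neg h' (add_neg h h')⟩
  refine ⟨v / (v + v'), v' / (v + v'), hw, hw', by rw [← add_div, div_self hs], ?_⟩
  simp only [smul_eq_mul]
  field_simp

theorem injOn_Icc_of_hasDerivAt_ne_zero {g g' : ℝ → ℝ} {a b : ℝ} (hg : ContinuousOn g (Icc a b))
    (hg' : ∀ x ∈ Ioo a b, HasDerivAt g (g' x) x) (hg'0 : ∀ x ∈ Ioo a b, g' x ≠ 0) :
    InjOn g (Icc a b) := by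
  suffices ∀ u ∈ Icc a b, ∀ v ∈ Icc a b, u < v → g u ≠ g v by
    intro u hu v hv huv
    by_contra hne
    rcases lt_or_gt_of_ne hne with h | h
    exacts [this u hu v hv h huv, this v hv u hu h huv.symm]
  intro u hu v hv huv heq
  have hsub : Ioo u v ⊆ Ioo a b := Ioo_subset_Ioo hu.1 hv.2
  obtain ⟨c, hc, hc0⟩ := exists_hasDerivAt_eq_zero huv (hg.mono (Icc_subset_Icc hu.1 hv.2)) heq
    fun x hx => hg' x (hsub hx)
  exact hg'0 c (hsub hc) hc0

theorem sub_mul_sub_pos_of_injOn {g : ℝ → ℝ} {p q r : ℝ} (hg : ContinuousOn g (Icc p r))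
    (hinj : InjOn g (Icc p r)) (hpq : p < q) (hqr : q < r) :
    0 < (g q - g p) * (g r - g q) := by
  have hp : p ∈ Icc p r := left_mem_Icc.2 (hpq.trans hqr).le
  have hq : q ∈ Icc p r := ⟨hpq.le, hqr.le⟩
  have hr : r ∈ Icc p r := right_mem_Icc.2 (hpq.trans hqr).le
  rcases hg.strictMonoOn_of_injOn_Icc' (hpq.trans hqr).le hinj with hm | hm
  · exact mul_pos (sub_pos.2 (hm hp hq hpq)) (sub_pos.2 (hm hq hr hqr))
  · exact mul_pos_of_neg_of_neg (sub_neg.2 (hm hp hq hpq)) (sub_neg.2 (hm hq hr hqr))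

noncomputable def cauchySlope (f g : ℝ → ℝ) (p q : ℝ) : ℝ := (f q - f p) / (g q - g p)

section CauchySlope

variable {a b p q r : ℝ} {f g f' g' : ℝ → ℝ}

theorem cauchySlope_comm (f g : ℝ → ℝ) (p q : ℝ) : cauchySlope f g p q = cauchySlope f g q p := by
  rw [cauchySlope, cauchySlope, ← neg_sub, ← neg_sub (g p), neg_div_neg_eq]

theorem cauchySlope_neg_left (f g : ℝ → ℝ) (p : ℝ) :
    cauchySlope (-f) g p = -cauchySlope f g p := by
  ext q
  rw [Pi.neg_apply, cauchySlope, cauchySlope, ← neg_div, Pi.neg_apply, Pi.neg_apply, neg_sub_neg,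
    neg_sub]

theorem cauchySlope_mem_openSegment (hg : 0 < (g q - g p) * (g r - g q)) :
    cauchySlope f g p r ∈ openSegment ℝ (cauchySlope f g p q) (cauchySlope f g q r) := by
  simp only [cauchySlope]
  rw [← sub_add_sub_cancel' (f q) (f p) (f r), ← sub_add_sub_cancel' (g q) (g p) (g r)]
  exact add_div_add_mem_openSegment hg

theorem exists_mem_Ioo_cauchySlope_eq (hpq : p < q) (hf : ContinuousOn f (Icc p q))
    (hg : ContinuousOn g (Icc p q)) (hf' : ∀ x ∈ Ioo p q, HasDerivAt f (f' x) x)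
    (hg' : ∀ x ∈ Ioo p q, HasDerivAt g (g' x) x) (hg'0 : ∀ x ∈ Ioo p q, g' x ≠ 0) :
    ∃ c ∈ Ioo p q, cauchySlope f g p q = f' c / g' c := by
  obtain ⟨c, hc, hc_eq⟩ := exists_ratio_hasDerivAt_eq_ratio_slope f f' hpq hf hf' g g' hg hg'
  have hgpq : g q - g p ≠ 0 := sub_ne_zero.2 fun h =>
    hpq.ne (injOn_Icc_of_hasDerivAt_ne_zero hg hg' hg'0 (left_mem_Icc.2 hpq.le)
      (right_mem_Icc.2 hpq.le) h.symm)
  refine ⟨c, hc, ?_⟩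
  rw [cauchySlope, div_eq_div_iff hgpq (hg'0 c hc)]
  linear_combination -hc_eq

theorem exists_lt_cauchySlope_eq (hp : a ≤ p) (hpq : p < q) (hqr : q < r) (hr : r ≤ b)
    (hf : ContinuousOn f (Icc a b)) (hg : ContinuousOn g (Icc a b))
    (hf' : ∀ x ∈ Ioo a b, HasDerivAt f (f' x) x) (hg' : ∀ x ∈ Ioo a b, HasDerivAt g (g' x) x)
    (hg'0 : ∀ x ∈ Ioo a b, g' x ≠ 0) :
    ∃ c ∈ Ioo a b, ∃ d ∈ Ioo a b, c < d ∧
      cauchySlope f g p q = f' c / g' c ∧ cauchySlope f g q r = f' d / g' d := by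
  have hsub : ∀ {u v}, a ≤ u → v ≤ b → Ioo u v ⊆ Ioo a b := Ioo_subset_Ioo
  have hqb : q ≤ b := hqr.le.trans hr
  have haq : a ≤ q := hp.trans hpq.le
  obtain ⟨c, hc, hc_eq⟩ := exists_mem_Ioo_cauchySlope_eq hpq (hf.mono (Icc_subset_Icc hp hqb))
    (hg.mono (Icc_subset_Icc hp hqb)) (fun x hx => hf' x (hsub hp hqb hx))
    (fun x hx => hg' x (hsub hp hqb hx)) (fun x hx => hg'0 x (hsub hp hqb hx))
  obtain ⟨d, hd, hd_eq⟩ := exists_mem_Ioo_cauchySlope_eq hqr (hf.mono (Icc_subset_Icc haq hr))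
    (hg.mono (Icc_subset_Icc haq hr)) (fun x hx => hf' x (hsub haq hr hx))
    (fun x hx => hg' x (hsub haq hr hx)) (fun x hx => hg'0 x (hsub haq hr hx))
  exact ⟨c, hsub hp hqb hc, d, hsub haq hr hd, hc.2.trans hd.1, hc_eq, hd_eq⟩

theorem cauchySlope_mem_openSegment_of_hasDerivAt_ne_zero (hp : a ≤ p) (hpq : p < q) (hqr : q < r) (hr : r ≤ b)
    (hg : ContinuousOn g (Icc a b)) (hg' : ∀ x ∈ Ioo a b, HasDerivAt g (g' x) x)
    (hg'0 : ∀ x ∈ Ioo a b, g' x ≠ 0) :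
    cauchySlope f g p r ∈ openSegment ℝ (cauchySlope f g p q) (cauchySlope f g q r) := by
  have hinj := (injOn_Icc_of_hasDerivAt_ne_zero hg hg' hg'0).mono (Icc_subset_Icc hp hr)
  exact cauchySlope_mem_openSegment
    (sub_mul_sub_pos_of_injOn (hg.mono (Icc_subset_Icc hp hr)) hinj hpq hqr)

theorem monotoneOn_cauchySlope (hf : ContinuousOn f (Icc a b)) (hg : ContinuousOn g (Icc a b))
    (hf' : ∀ x ∈ Ioo a b, HasDerivAt f (f' x) x) (hg' : ∀ x ∈ Ioo a b, HasDerivAt g (g' x) x)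
    (hg'0 : ∀ x ∈ Ioo a b, g' x ≠ 0) (hρ : MonotoneOn (fun x => f' x / g' x) (Ioo a b)) :
    MonotoneOn (cauchySlope f g a) (Ioo a b) ∧ MonotoneOn (cauchySlope f g b) (Ioo a b) := by
  have key : ∀ p q r, a ≤ p → p < q → q < r → r ≤ b →
      cauchySlope f g p r ∈ Icc (cauchySlope f g p q) (cauchySlope f g q r) := by
    intro p q r hp hpq hqr hr
    obtain ⟨c, hc, d, hd, hcd, hc_eq, hd_eq⟩ :=
      exists_lt_cauchySlope_eq hp hpq hqr hr hf hg hf' hg' hg'0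
    have hle : cauchySlope f g p q ≤ cauchySlope f g q r := by
      rw [hc_eq, hd_eq]
      exact hρ hc hd hcd.le
    rw [← segment_eq_Icc hle]
    exact openSegment_subset_segment ℝ _ _
      (cauchySlope_mem_openSegment_of_hasDerivAt_ne_zero hp hpq hqr hr hg hg' hg'0)
  refine ⟨monotoneOn_iff_forall_lt.2 fun x hx y hy hxy => (key a x y le_rfl hx.1 hxy hy.2.le).1,
    monotoneOn_iff_forall_lt.2 fun x hx y hy hxy => ?_⟩
  rw [cauchySlope_comm f g b x, cauchySlope_comm f g b y]
  exact (key x y b hx.1.le hxy hy.2 le_rfl).2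

theorem strictMonoOn_cauchySlope (hf : ContinuousOn f (Icc a b)) (hg : ContinuousOn g (Icc a b))
    (hf' : ∀ x ∈ Ioo a b, HasDerivAt f (f' x) x) (hg' : ∀ x ∈ Ioo a b, HasDerivAt g (g' x) x)
    (hg'0 : ∀ x ∈ Ioo a b, g' x ≠ 0) (hρ : StrictMonoOn (fun x => f' x / g' x) (Ioo a b)) :
    StrictMonoOn (cauchySlope f g a) (Ioo a b) ∧ StrictMonoOn (cauchySlope f g b) (Ioo a b) := by
  have key : ∀ p q r, a ≤ p → p < q → q < r → r ≤ b →
      cauchySlope f g p r ∈ Ioo (cauchySlope f g p q) (cauchySlope f g q r) := by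
    intro p q r hp hpq hqr hr
    obtain ⟨c, hc, d, hd, hcd, hc_eq, hd_eq⟩ :=
      exists_lt_cauchySlope_eq hp hpq hqr hr hf hg hf' hg' hg'0
    have hlt : cauchySlope f g p q < cauchySlope f g q r := by
      rw [hc_eq, hd_eq]
      exact hρ hc hd hcd
    rw [← openSegment_eq_Ioo hlt]
    exact cauchySlope_mem_openSegment_of_hasDerivAt_ne_zero hp hpq hqr hr hg hg' hg'0
  refine ⟨fun x hx y hy hxy => (key a x y le_rfl hx.1 hxy hy.2.le).1, fun x hx y hy hxy => ?_⟩
  rw [cauchySlope_comm f g b x, cauchySlope_comm f g b y]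
  exact (key x y b hx.1.le hxy hy.2 le_rfl).2

theorem antitoneOn_cauchySlope (hf : ContinuousOn f (Icc a b)) (hg : ContinuousOn g (Icc a b))
    (hf' : ∀ x ∈ Ioo a b, HasDerivAt f (f' x) x) (hg' : ∀ x ∈ Ioo a b, HasDerivAt g (g' x) x)
    (hg'0 : ∀ x ∈ Ioo a b, g' x ≠ 0) (hρ : AntitoneOn (fun x => f' x / g' x) (Ioo a b)) :
    AntitoneOn (cauchySlope f g a) (Ioo a b) ∧ AntitoneOn (cauchySlope f g b) (Ioo a b) := by
  have h := monotoneOn_cauchySlope hf.neg hg (fun x hx => (hf' x hx).neg) hg' hg'0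
    (by simpa only [neg_div] using hρ.neg)
  rw [cauchySlope_neg_left, cauchySlope_neg_left] at h
  exact ⟨fun x hx y hy hxy => neg_le_neg_iff.1 (h.1 hx hy hxy),
    fun x hx y hy hxy => neg_le_neg_iff.1 (h.2 hx hy hxy)⟩

theorem strictAntiOn_cauchySlope (hf : ContinuousOn f (Icc a b)) (hg : ContinuousOn g (Icc a b))
    (hf' : ∀ x ∈ Ioo a b, HasDerivAt f (f' x) x) (hg' : ∀ x ∈ Ioo a b, HasDerivAt g (g' x) x)
    (hg'0 : ∀ x ∈ Ioo a b, g' x ≠ 0) (hρ : StrictAntiOn (fun x => f' x / g' x) (Ioo a b)) :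
    StrictAntiOn (cauchySlope f g a) (Ioo a b) ∧ StrictAntiOn (cauchySlope f g b) (Ioo a b) := by
  have h := strictMonoOn_cauchySlope hf.neg hg (fun x hx => (hf' x hx).neg) hg' hg'0
    (by simpa only [neg_div] using hρ.neg)
  rw [cauchySlope_neg_left, cauchySlope_neg_left] at h
  exact ⟨fun x hx y hy hxy => neg_lt_neg_iff.1 (h.1 hx hy hxy),
    fun x hx y hy hxy => neg_lt_neg_iff.1 (h.2 hx hy hxy)⟩

end CauchySlope

theorem monotone_lhopital_general (a b : ℝ) (f g f' g' : ℝ → ℝ)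
    (hf : ContinuousOn f (Icc a b)) (hg : ContinuousOn g (Icc a b))
    (hf' : ∀ x ∈ Ioo a b, HasDerivAt f (f' x) x)
    (hg' : ∀ x ∈ Ioo a b, HasDerivAt g (g' x) x)
    (hg'0 : ∀ x ∈ Ioo a b, g' x ≠ 0) :
    (MonotoneOn (fun x => f' x / g' x) (Ioo a b) →
      MonotoneOn (fun x => (f x - f a) / (g x - g a)) (Ioo a b) ∧
      MonotoneOn (fun x => (f x - f b) / (g x - g b)) (Ioo a b)) ∧
    (StrictMonoOn (fun x => f' x / g' x) (Ioo a b) →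
      StrictMonoOn (fun x => (f x - f a) / (g x - g a)) (Ioo a b) ∧
      StrictMonoOn (fun x => (f x - f b) / (g x - g b)) (Ioo a b)) ∧
    (AntitoneOn (fun x => f' x / g' x) (Ioo a b) →
      AntitoneOn (fun x => (f x - f a) / (g x - g a)) (Ioo a b) ∧
      AntitoneOn (fun x => (f x - f b) / (g x - g b)) (Ioo a b)) ∧
    (StrictAntiOn (fun x => f' x / g' x) (Ioo a b) →
      StrictAntiOn (fun x => (f x - f a) / (g x - g a)) (Ioo a b) ∧
      StrictAntiOn (fun x => (f x - f b) / (g x - g b)) (Ioo a b)) :=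
  ⟨monotoneOn_cauchySlope hf hg hf' hg' hg'0, strictMonoOn_cauchySlope hf hg hf' hg' hg'0,
    antitoneOn_cauchySlope hf hg hf' hg' hg'0, strictAntiOn_cauchySlope hf hg hf' hg' hg'0⟩

/-- Monotone form of l'Hôpital's rule. Suppose `f, g : [a,b] → ℝ` are continuous on `[a,b]`,
differentiable on `(a,b)` with derivatives `f'`, `g'`, where `g' ≠ 0` on `(a,b)`. If
`f'/g'` is (strictly) increasing (resp. decreasing) on `(a,b)`, so are
`x ↦ (f x − f a)/(g x − g a)` and `x ↦ (f x − f b)/(g x − g b)`. -/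
theorem monotone_lhopital (a b : ℝ) (hab : a < b) (f g f' g' : ℝ → ℝ)
    (hf : ContinuousOn f (Icc a b)) (hg : ContinuousOn g (Icc a b))
    (hf' : ∀ x ∈ Ioo a b, HasDerivAt f (f' x) x)
    (hg' : ∀ x ∈ Ioo a b, HasDerivAt g (g' x) x)
    (hg'0 : ∀ x ∈ Ioo a b, g' x ≠ 0) :
    (MonotoneOn (fun x => f' x / g' x) (Ioo a b) →
      MonotoneOn (fun x => (f x - f a) / (g x - g a)) (Ioo a b) ∧
      MonotoneOn (fun x => (f x - f b) / (g x - g b)) (Ioo a b)) ∧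
    (StrictMonoOn (fun x => f' x / g' x) (Ioo a b) →
      StrictMonoOn (fun x => (f x - f a) / (g x - g a)) (Ioo a b) ∧
      StrictMonoOn (fun x => (f x - f b) / (g x - g b)) (Ioo a b)) ∧
    (AntitoneOn (fun x => f' x / g' x) (Ioo a b) →
      AntitoneOn (fun x => (f x - f a) / (g x - g a)) (Ioo a b) ∧
      AntitoneOn (fun x => (f x - f b) / (g x - g b)) (Ioo a b)) ∧
    (StrictAntiOn (fun x => f' x / g' x) (Ioo a b) →
      StrictAntiOn (fun x => (f x - f a) / (g x - g a)) (Ioo a b) ∧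
      StrictAntiOn (fun x => (f x - f b) / (g x - g b)) (Ioo a b)) :=
  monotone_lhopital_general a b f g f' g' hf hg hf' hg' hg'0
end

section
/- Let G be a proper convex subdomain of ℝⁿ. Then for all x, y ∈ G, v_G(x,y) ≤ (π/log 4) · k_G(x,y), where k_G is the quasihyperbolic metric. -/
/-!
Fix `z ∈ ∂G` and a path `γ` from `x` to `y` in `G`, and let `σ = (γ - z) / ‖γ - z‖` be its radial
projection onto the unit sphere about `z`. The speed of `σ` is at most
`‖γ'‖ / ‖γ - z‖ ≤ ‖γ'‖ / d(γ, ∂G)`, so the chord `‖σ 1 - σ 0‖` is at most the quasihyperbolic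
length of `γ`. By Jordan's inequality the angle `θ` between two unit vectors satisfies
`θ ≤ (π / 2) · 2 sin (θ / 2) = (π / 2) · chord`. Hence `v_G ≤ (π / 2) k_G`, and `π / 2 < π / log 4`.
-/

open Real Set Metric intervalIntegral

/-- The quasihyperbolic metric: infimum over smooth paths `γ` in `G` joining `x` to `y`
of `∫ ‖γ'(t)‖ / dist(γ(t), ∂G) dt`. -/
noncomputable def quasiHyp {n : ℕ} (G : Set (EuclideanSpace ℝ (Fin n)))
    (x y : EuclideanSpace ℝ (Fin n)) : ℝ :=
  sInf {l | ∃ γ : ℝ → EuclideanSpace ℝ (Fin n), γ 0 = x ∧ γ 1 = y ∧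
    (∀ t ∈ Icc (0:ℝ) 1, γ t ∈ G) ∧ ContDiffOn ℝ 1 γ (Icc (0:ℝ) 1) ∧
    l = ∫ t in (0:ℝ)..1, ‖deriv γ t‖ / infDist (γ t) (frontier G)}

open RealInnerProductSpace MeasureTheory

section InnerProductSpace

variable {E : Type*} [NormedAddCommGroup E] [InnerProductSpace ℝ E]

namespace InnerProductGeometry

theorem norm_sub_eq_two_mul_sin_angle_div_two {u w : E} (hu : ‖u‖ = 1) (hw : ‖w‖ = 1) :
    ‖u - w‖ = 2 * sin (angle u w / 2) := by
  have hsin : 0 ≤ sin (angle u w / 2) :=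
    sin_nonneg_of_nonneg_of_le_pi (by linarith [angle_nonneg u w])
      (by linarith [angle_le_pi u w, pi_pos])
  rw [← sq_eq_sq₀ (norm_nonneg _) (by positivity), norm_sub_sq_real,
    ← cos_angle_mul_norm_mul_norm, hu, hw, mul_pow, sin_sq_eq_half_sub,
    show 2 * (angle u w / 2) = angle u w by ring]
  ring

theorem angle_le_pi_div_two_mul_norm_sub {u w : E} (hu : ‖u‖ = 1) (hw : ‖w‖ = 1) :
    angle u w ≤ π / 2 * ‖u - w‖ := by
  have hjordan : 2 / π * (angle u w / 2) ≤ sin (angle u w / 2) :=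
    mul_le_sin (by linarith [angle_nonneg u w]) (by linarith [angle_le_pi u w])
  rw [norm_sub_eq_two_mul_sin_angle_div_two hu hw]
  have hπ := pi_pos
  calc angle u w = π * (2 / π * (angle u w / 2)) := by field_simp
    _ ≤ π / 2 * (2 * sin (angle u w / 2)) := by nlinarith

end InnerProductGeometry

namespace NormedSpace

theorem inner_normalize_self (x : E) : ⟪normalize x, x⟫ = ‖x‖ := by
  rcases eq_or_ne x 0 with rfl | hx
  · simp
  · rw [normalize, real_inner_smul_left, real_inner_self_eq_norm_sq]
    field_simp

theorem norm_normalize_le (x : E) : ‖normalize x‖ ≤ 1 := by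
  rcases eq_or_ne x 0 with rfl | hx
  · simp
  · exact (norm_normalize hx).le

end NormedSpace

theorem norm_sub_le_integral_of_norm_deriv_le {f f' : ℝ → E} {g : ℝ → ℝ} {a b : ℝ} (hab : a ≤ b)
    (hf : ContinuousOn f (Icc a b)) (hf' : ∀ t ∈ Ioo a b, HasDerivAt f (f' t) t)
    (hg : IntegrableOn g (Icc a b)) (hfg : ∀ t ∈ Ioo a b, ‖f' t‖ ≤ g t) :
    ‖f b - f a‖ ≤ ∫ t in a..b, g t := by
  -- Pairing with a unit vector reduces this to the real FTC inequality, which needs no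
  -- integrability of `f'`.
  set e := NormedSpace.normalize (f b - f a)
  have hderiv : ∀ t ∈ Ioo a b, HasDerivAt (fun s => ⟪e, f s⟫) ⟪e, f' t⟫ t := fun t ht => by
    simpa using (hasDerivAt_const t e).inner ℝ (hf' t ht)
  calc ‖f b - f a‖ = ⟪e, f b⟫ - ⟪e, f a⟫ := by
        rw [← inner_sub_right, NormedSpace.inner_normalize_self]
    _ ≤ ∫ t in a..b, g t := by
      refine sub_le_integral_of_hasDeriv_right_of_le hab
        (continuousOn_const.inner hf) (fun t ht => (hderiv t ht).hasDerivWithinAt) hg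
        fun t ht => ?_
      calc ⟪e, f' t⟫ ≤ ‖e‖ * ‖f' t‖ := real_inner_le_norm _ _
        _ ≤ ‖f' t‖ := mul_le_of_le_one_left (norm_nonneg _) (NormedSpace.norm_normalize_le _)
        _ ≤ g t := hfg t ht

theorem HasDerivAt.norm {v : ℝ → E} {v' : E} {t : ℝ} (hv : HasDerivAt v v' t) (h0 : v t ≠ 0) :
    HasDerivAt (fun s => ‖v s‖) (⟪v t, v'⟫ / ‖v t‖) t := by
  have hsq := hv.norm_sq.sqrt (by positivity)
  simp only [sqrt_sq (norm_nonneg _)] at hsq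
  convert hsq using 1
  field_simp

theorem HasDerivAt.normalize {v : ℝ → E} {v' : E} {t : ℝ} (hv : HasDerivAt v v' t) (h0 : v t ≠ 0) :
    HasDerivAt (fun s => NormedSpace.normalize (v s))
      (‖v t‖⁻¹ • v' - (⟪v t, v'⟫ / ‖v t‖ ^ 3) • v t) t := by
  have h := ((hv.norm h0).inv (norm_ne_zero_iff.mpr h0)).smul hv
  refine h.congr_deriv ?_
  rw [sub_eq_add_neg, ← neg_smul]
  congr 2
  field_simp

theorem norm_inv_norm_smul_sub_inner_smul_le (v w : E) :
    ‖‖v‖⁻¹ • w - (⟪v, w⟫ / ‖v‖ ^ 3) • v‖ ≤ ‖w‖ / ‖v‖ := by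
  rcases eq_or_ne v 0 with rfl | hv
  · simp
  rw [← sq_le_sq₀ (norm_nonneg _) (by positivity), norm_sub_sq_real, norm_smul, norm_smul,
    real_inner_smul_left, real_inner_smul_right, real_inner_comm w v]
  simp only [norm_inv, Real.norm_eq_abs, abs_norm, mul_pow, sq_abs, div_pow]
  field_simp
  linarith [sq_nonneg ⟪w, v⟫]

theorem ContDiffOn.integrableOn_deriv {f : ℝ → E} {a b : ℝ} (hf : ContDiffOn ℝ 1 f (Icc a b)) :
    IntegrableOn (deriv f) (Icc a b) := by
  refine IntegrableOn.congr_set_ae ?_ Ioo_ae_eq_Icc.symm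
  rcases lt_or_ge a b with hab | hba
  · have hcont := hf.continuousOn_derivWithin (uniqueDiffOn_Icc hab) le_rfl
    exact (hcont.integrableOn_Icc.mono_set Ioo_subset_Icc_self).congr_fun
      (fun t ht => derivWithin_of_mem_nhds (Icc_mem_nhds ht.1 ht.2)) measurableSet_Ioo
  · rw [Ioo_eq_empty (not_lt.2 hba)]
    exact integrableOn_empty

namespace EuclideanGeometry

theorem angle_le_pi_div_two_mul_integral {γ γ' : ℝ → E} {g : ℝ → ℝ} {z : E} {a b : ℝ}
    (hab : a ≤ b) (hγ : ContinuousOn γ (Icc a b)) (hγ' : ∀ t ∈ Ioo a b, HasDerivAt γ (γ' t) t)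
    (hz : ∀ t ∈ Icc a b, γ t ≠ z) (hg : IntegrableOn g (Icc a b))
    (hγg : ∀ t ∈ Ioo a b, ‖γ' t‖ / ‖γ t - z‖ ≤ g t) :
    angle (γ a) z (γ b) ≤ π / 2 * ∫ t in a..b, g t := by
  set σ := fun t => NormedSpace.normalize (γ t - z)
  have hv : ∀ t ∈ Icc a b, γ t - z ≠ 0 := fun t ht => sub_ne_zero.mpr (hz t ht)
  have hσ : ContinuousOn σ (Icc a b) :=
    ((hγ.sub continuousOn_const).norm.inv₀ fun t ht => norm_ne_zero_iff.mpr (hv t ht)).smul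
      (hγ.sub continuousOn_const)
  have hσ' : ∀ t ∈ Ioo a b, HasDerivAt σ _ t := fun t ht =>
    ((hγ' t ht).sub_const z).normalize (hv t (Ioo_subset_Icc_self ht))
  have hchord : ‖σ b - σ a‖ ≤ ∫ t in a..b, g t :=
    norm_sub_le_integral_of_norm_deriv_le hab hσ hσ' hg fun t ht =>
      (norm_inv_norm_smul_sub_inner_smul_le _ _).trans (hγg t ht)
  calc angle (γ a) z (γ b) = InnerProductGeometry.angle (σ a) (σ b) := by
        simp only [σ, InnerProductGeometry.angle_normalize_left,
          InnerProductGeometry.angle_normalize_right]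
        rfl
    _ ≤ π / 2 * ‖σ a - σ b‖ := InnerProductGeometry.angle_le_pi_div_two_mul_norm_sub
        (NormedSpace.norm_normalize (hv a (left_mem_Icc.2 hab)))
        (NormedSpace.norm_normalize (hv b (right_mem_Icc.2 hab)))
    _ ≤ π / 2 * ∫ t in a..b, g t := by
        rw [norm_sub_rev]
        gcongr

theorem angle_le_pi_div_two_mul_integral_div_infDist {γ : ℝ → E} {s : Set E} {z : E} {a b : ℝ}
    (hab : a ≤ b) (hγ : ContDiffOn ℝ 1 γ (Icc a b)) (hγs : ∀ t ∈ Icc a b, γ t ∉ closure s)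
    (hz : z ∈ s) :
    angle (γ a) z (γ b) ≤ π / 2 * ∫ t in a..b, ‖deriv γ t‖ / infDist (γ t) s := by
  have hd : ∀ t ∈ Icc a b, infDist (γ t) s ≠ 0 := fun t ht =>
    ((infDist_pos_iff_notMem_closure ⟨z, hz⟩).1 (hγs t ht)).ne'
  refine angle_le_pi_div_two_mul_integral hab hγ.continuousOn (fun t ht =>
    ((hγ.differentiableOn one_ne_zero t (Ioo_subset_Icc_self ht)).differentiableAt
      (Icc_mem_nhds ht.1 ht.2)).hasDerivAt)
    (fun t ht h => hγs t ht (h ▸ subset_closure hz)) ?_ fun t ht => ?_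
  · simp_rw [div_eq_mul_inv]
    have hnorm : IntegrableOn (fun t => ‖deriv γ t‖) (Icc a b) := hγ.integrableOn_deriv.norm
    exact hnorm.mul_continuousOn
      ((continuous_infDist_pt s).comp_continuousOn hγ.continuousOn |>.inv₀ hd) isCompact_Icc
  · refine div_le_div_of_nonneg_left (norm_nonneg _)
      (infDist_nonneg.lt_of_ne (hd t (Ioo_subset_Icc_self ht)).symm) ?_
    rw [← dist_eq_norm]
    exact infDist_le_dist_of_mem hz

end EuclideanGeometry

end InnerProductSpace

theorem quasiHyp_nonneg {n : ℕ} (G : Set (EuclideanSpace ℝ (Fin n)))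
    (x y : EuclideanSpace ℝ (Fin n)) : 0 ≤ quasiHyp G x y := by
  refine Real.sInf_nonneg ?_
  rintro _ ⟨γ, -, -, -, -, rfl⟩
  exact integral_nonneg zero_le_one fun t _ => div_nonneg (norm_nonneg _) infDist_nonneg

theorem visualAngle_le_pi_div_two_mul_quasiHyp {n : ℕ} {G : Set (EuclideanSpace ℝ (Fin n))}
    (hopen : IsOpen G) (hconv : Convex ℝ G) (hproper : G ≠ univ)
    {x y : EuclideanSpace ℝ (Fin n)} (hx : x ∈ G) (hy : y ∈ G) :
    visualAngle G x y ≤ π / 2 * quasiHyp G x y := by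
  have hfr : (frontier G).Nonempty := nonempty_frontier_iff.mpr ⟨⟨x, hx⟩, hproper⟩
  refine csSup_le (hfr.image _) ?_
  rintro _ ⟨z, hz, rfl⟩
  rw [← div_le_iff₀' (by positivity)]
  refine le_csInf ⟨_, fun t => x + t • (y - x), by simp, by simp,
    fun t ht => hconv.add_smul_sub_mem hx hy ht, by fun_prop, rfl⟩ ?_
  rintro _ ⟨γ, rfl, rfl, hγG, hγ, rfl⟩
  rw [div_le_iff₀' (by positivity)]
  refine EuclideanGeometry.angle_le_pi_div_two_mul_integral_div_infDist zero_le_one hγ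
    (fun t ht => ?_) hz
  rw [isClosed_frontier.closure_eq, hopen.frontier_eq]
  exact fun h => h.2 (hγG t ht)

theorem visualAngle_le_quasiHyp_general {n : ℕ}
    (G : Set (EuclideanSpace ℝ (Fin n)))
    (hopen : IsOpen G) (hconv : Convex ℝ G) (hproper : G ≠ univ)
    (x y : EuclideanSpace ℝ (Fin n)) (hx : x ∈ G) (hy : y ∈ G) :
    visualAngle G x y ≤ π / Real.log 4 * quasiHyp G x y := by
  have hlog : Real.log 4 < 2 := by
    rw [show (4 : ℝ) = 2 ^ 2 by norm_num, Real.log_pow]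
    norm_num
    linarith [Real.log_two_lt_d9]
  have hconst : π / 2 ≤ π / Real.log 4 :=
    div_le_div_of_nonneg_left pi_pos.le (Real.log_pos (by norm_num)) hlog.le
  calc visualAngle G x y ≤ π / 2 * quasiHyp G x y :=
        visualAngle_le_pi_div_two_mul_quasiHyp hopen hconv hproper hx hy
    _ ≤ π / Real.log 4 * quasiHyp G x y :=
        mul_le_mul_of_nonneg_right hconst (quasiHyp_nonneg G x y)

/-- On a proper convex subdomain, `v_G(x,y) ≤ (π / log 4) k_G(x,y)`. -/
theorem visualAngle_le_quasiHyp {n : ℕ} (hn : 2 ≤ n)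
    (G : Set (EuclideanSpace ℝ (Fin n)))
    (hopen : IsOpen G) (hconv : Convex ℝ G) (hne : G.Nonempty) (hproper : G ≠ univ)
    (x y : EuclideanSpace ℝ (Fin n)) (hx : x ∈ G) (hy : y ∈ G) :
    visualAngle G x y ≤ π / Real.log 4 * quasiHyp G x y :=
  visualAngle_le_quasiHyp_general G hopen hconv hproper x y hx hy
end
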